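/- Let B_i be the l_i×l_i matrix with (s,t) entry (0-based) equal to binom(s+t, s)·a_{i,s+t} when s+t ≤ l_i−1 and 0 otherwise. Then det B_i = (−1)^{l_i(l_i−1)/2} · a_{i,l_i−1}^{l_i} · ∏_{s=0}^{l_i−1} binom(l_i−1, s). In particular, B_i is invertible if and only if a_{i,l_i−1} ≠ 0, and the block-diagonal matrix B = diag(B_1,…,B_n) is invertible if and only if a_{i,l_i−1} ≠ 0 for every i = 1,…,n. -/
import Mathlib


open scoped BigOperators

noncomputable section

/-- The confluent Prony moments `m_k = Σ_i Σ_{j<l_i} a_{i,j} (k)_j ξ_i^{k-j}`,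
where `(k)_j` is the falling factorial (so the term vanishes when `j > k`). -/
def pronyMoment {n : ℕ} (l : Fin n → ℕ) (ξ : Fin n → ℂ)
    (a : (i : Fin n) → Fin (l i) → ℂ) (k : ℕ) : ℂ :=
  ∑ i, ∑ j : Fin (l i), a i j * (k.descFactorial j : ℂ) * ξ i ^ (k - (j : ℕ))

/-- Offset of the `i`-th block of columns: the sum of the multiplicities of all previous blocks. -/
def blockOff {n : ℕ} (L : Fin n → ℕ) (i : Fin n) : ℕ := ∑ i' ∈ Finset.Iio i, L i'

theorem blockOff_add_lt {n : ℕ} (L : Fin n → ℕ) (i : Fin n) {j : ℕ} (hj : j < L i) :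
    blockOff L i + j < ∑ i', L i' := by
  have h1 : ∑ i' ∈ insert i (Finset.Iio i), L i' = ∑ i' ∈ Finset.Iio i, L i' + L i := by
    rw [Finset.sum_insert (by simp)]; ring
  have h2 : ∑ i' ∈ insert i (Finset.Iio i), L i' ≤ ∑ i', L i' :=
    Finset.sum_le_sum_of_subset (Finset.subset_univ _)
  unfold blockOff
  omega

/-- The flattened index of position `j` inside block `i`, when block `i` has size `L i`. -/
def encC {n : ℕ} (L : Fin n → ℕ) (i : Fin n) (j : Fin (L i)) : Fin (∑ i', L i') :=
  ⟨blockOff L i + j, blockOff_add_lt L i j.isLt⟩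

/-- The (square) confluent Vandermonde matrix on nodes `ξ_i` with multiplicities `L i`:
rows are indexed by `k = 0,…,(∑ L i)−1`; the entry in row `k` and column `j` of block `i`
is `(k)_j ξ_i^{k−j}` (zero when `j > k`). -/
def confVand {n : ℕ} (L : Fin n → ℕ) (ξ : Fin n → ℂ) :
    Matrix (Fin (∑ i, L i)) (Fin (∑ i, L i)) ℂ :=
  fun k c => ∑ i, ∑ j : Fin (L i),
    if c = encC L i j then ((k : ℕ).descFactorial j : ℂ) * ξ i ^ ((k : ℕ) - (j : ℕ)) else 0

/-- The `l×l` magnitude block `B_i`: the `(s,t)` entry (0-based) is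
`binom(s+t,s)·a_{s+t}` when `s+t ≤ l−1`, and `0` otherwise. -/
def magBlock (l : ℕ) (a : Fin l → ℂ) : Matrix (Fin l) (Fin l) ℂ :=
  fun s t =>
    if h : (s : ℕ) + (t : ℕ) ≤ l - 1 then
      (((s : ℕ) + (t : ℕ)).choose (s : ℕ) : ℂ) *
        a ⟨(s : ℕ) + (t : ℕ), by have := s.isLt; omega⟩
    else 0

/-- The block-diagonal magnitude matrix `B = diag(B_1,…,B_n)`. -/
def magBlockMat {n : ℕ} (l : Fin n → ℕ) (a : (i : Fin n) → Fin (l i) → ℂ) :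
    Matrix (Fin (∑ i, l i)) (Fin (∑ i, l i)) ℂ :=
  fun r c => ∑ i, ∑ s : Fin (l i), ∑ t : Fin (l i),
    if r = encC l i s ∧ c = encC l i t then magBlock (l i) (a i) s t else 0

/-- The `C×C` Hankel matrix of the confluent Prony moments. -/
def pronyHankel {n : ℕ} (l : Fin n → ℕ) (ξ : Fin n → ℂ)
    (a : (i : Fin n) → Fin (l i) → ℂ) :
    Matrix (Fin (∑ i, l i)) (Fin (∑ i, l i)) ℂ :=
  fun s t => pronyMoment l ξ a ((s : ℕ) + (t : ℕ))


open Equiv in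
private lemma revPerm_succ_aux (n : ℕ) :
    (Fin.revPerm : Perm (Fin (n+1))) =
      finRotate (n+1) * (finSuccEquivLast.symm.permCongr (Fin.revPerm.optionCongr)) := by
  ext i
  refine Fin.lastCases ?_ (fun i => ?_) i
  · simp [Perm.mul_apply, permCongr_apply, finSuccEquivLast_last, finRotate_last]
  · simp only [Perm.mul_apply, permCongr_apply, Equiv.symm_symm, finSuccEquivLast_castSucc,
      optionCongr_apply, Option.map_some, Fin.revPerm_apply, finSuccEquivLast_symm_some]
    rw [coe_finRotate]
    simp only [Fin.val_rev, Fin.coe_castSucc, Fin.ext_iff, Fin.val_last]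
    split <;> omega

open Equiv in
private lemma sign_revPerm_aux : ∀ l : ℕ,
    Perm.sign (Fin.revPerm : Perm (Fin l)) = (-1 : ℤˣ) ^ (l * (l-1) / 2)
  | 0 => by decide
  | (n+1) => by
    rw [revPerm_succ_aux, map_mul, sign_finRotate, Perm.sign_permCongr, Equiv.optionCongr_sign,
      sign_revPerm_aux n]
    rw [← pow_add]
    congr 1
    have := Nat.triangle_succ n
    omega

private lemma magBlock_det_aux (l : ℕ) (hl : 1 ≤ l) (a : Fin l → ℂ) :
    (magBlock l a).det =
      (-1 : ℂ) ^ (l * (l - 1) / 2) * (a ⟨l - 1, by omega⟩) ^ l *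
        ∏ s ∈ Finset.range l, ((l - 1).choose s : ℂ) := by
  have hperm := Matrix.det_permute' (Fin.revPerm) (magBlock l a)
  have htri : ((magBlock l a).submatrix id ⇑Fin.revPerm).BlockTriangular id := by
    intro s t hst
    have h1 : (t : ℕ) < (s : ℕ) := hst
    have h2 := s.isLt
    simp only [Matrix.submatrix_apply, id_eq, magBlock, Fin.revPerm_apply, Fin.val_rev]
    rw [dif_neg (by omega)]
  have hdiag : ∀ i : Fin l, ((magBlock l a).submatrix id ⇑Fin.revPerm) i i
      = ((l - 1).choose (i : ℕ) : ℂ) * a ⟨l - 1, by omega⟩ := by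
    intro i
    have h2 := i.isLt
    simp only [Matrix.submatrix_apply, id_eq, magBlock, Fin.revPerm_apply, Fin.val_rev]
    rw [dif_pos (by omega)]
    congr 2 <;> first | (congr 1; omega) | (apply Fin.ext; simp; omega)
  have hdet2 := Matrix.det_of_upperTriangular htri
  rw [Finset.prod_congr rfl (fun i _ => hdiag i), Finset.prod_mul_distrib,
    Finset.prod_const, Finset.card_univ, Fintype.card_fin] at hdet2
  rw [Fin.prod_univ_eq_prod_range (fun s => ((l - 1).choose s : ℂ))] at hdet2
  rw [sign_revPerm_aux] at hperm
  push_cast at hperm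
  set k := l * (l - 1) / 2
  have hc : ((-1 : ℂ)) ^ k * ((-1 : ℂ)) ^ k = 1 := by
    rw [← pow_add]; exact Even.neg_one_pow ⟨k, rfl⟩
  rw [hdet2] at hperm
  calc (magBlock l a).det = ((-1:ℂ))^k * ((-1:ℂ))^k * (magBlock l a).det := by rw [hc, one_mul]
    _ = (-1:ℂ)^k * ((∏ s ∈ Finset.range l, ((l - 1).choose s : ℂ)) * a ⟨l - 1, by omega⟩ ^ l) := by
        rw [mul_assoc, ← hperm]
    _ = _ := by ring

private lemma magBlock_isUnit_iff_aux (l : ℕ) (hl : 1 ≤ l) (a : Fin l → ℂ) :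
    IsUnit (magBlock l a) ↔ a ⟨l - 1, by omega⟩ ≠ 0 := by
  rw [Matrix.isUnit_iff_isUnit_det, magBlock_det_aux l hl a, isUnit_iff_ne_zero]
  have h1 : ((-1 : ℂ)) ^ (l*(l-1)/2) ≠ 0 := pow_ne_zero _ (by norm_num)
  have h2 : (∏ s ∈ Finset.range l, ((l - 1).choose s : ℂ)) ≠ 0 := by
    apply Finset.prod_ne_zero_iff.2
    intro s hs
    simp only [Finset.mem_range] at hs
    have := Nat.choose_pos (n := l-1) (k := s) (by omega)
    exact_mod_cast this.ne'
  constructor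
  · intro h ha
    apply h
    rw [ha, zero_pow (by omega : l ≠ 0)]
    ring
  · intro ha
    exact mul_ne_zero (mul_ne_zero h1 (pow_ne_zero _ ha)) h2

private lemma blockOff_mono_aux {n : ℕ} (L : Fin n → ℕ) {i i' : Fin n} (h : i < i') :
    blockOff L i + L i ≤ blockOff L i' := by
  have hsub : insert i (Finset.Iio i) ⊆ Finset.Iio i' := by
    intro x hx
    simp only [Finset.mem_insert, Finset.mem_Iio] at *
    rcases hx with rfl | hx
    · exact h
    · exact hx.trans h
  have := Finset.sum_le_sum_of_subset (f := L) hsub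
  rw [Finset.sum_insert (by simp)] at this
  unfold blockOff
  omega

private lemma encC_injective_aux {n : ℕ} (L : Fin n → ℕ) :
    Function.Injective (fun p : Σ i, Fin (L i) => encC L p.1 p.2) := by
  rintro ⟨i, j⟩ ⟨i', j'⟩ h
  simp only [encC, Fin.mk.injEq] at h
  rcases lt_trichotomy i i' with hlt | rfl | hlt
  · have := blockOff_mono_aux L hlt
    have := j.isLt
    omega
  · have : j = j' := Fin.ext (by omega)
    subst this; rfl
  · have := blockOff_mono_aux L hlt
    have := j'.isLt
    omega

private noncomputable def encEquivAux {n : ℕ} (L : Fin n → ℕ) :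
    (Σ i, Fin (L i)) ≃ Fin (∑ i', L i') :=
  Equiv.ofBijective _ ((Fintype.bijective_iff_injective_and_card _).2
    ⟨encC_injective_aux L, by simp⟩)

private lemma bigOf_eq_aux {n : ℕ} (L : Fin n → ℕ)
    (M : ∀ i, Matrix (Fin (L i)) (Fin (L i)) ℂ) :
    (fun r c => ∑ i, ∑ s : Fin (L i), ∑ t : Fin (L i),
        if r = encC L i s ∧ c = encC L i t then M i s t else 0)
      = (Matrix.blockDiagonal' M).submatrix (encEquivAux L).symm (encEquivAux L).symm := by
  funext r c
  obtain ⟨p, rfl⟩ := (encEquivAux L).surjective r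
  obtain ⟨q, rfl⟩ := (encEquivAux L).surjective c
  obtain ⟨pi, ps⟩ := p
  obtain ⟨qi, qt⟩ := q
  simp only [Matrix.submatrix_apply, Equiv.symm_apply_apply]
  have hcond : ∀ (i : Fin n) (s t : Fin (L i)),
      (encEquivAux L ⟨pi, ps⟩ = encC L i s ∧ encEquivAux L ⟨qi, qt⟩ = encC L i t) ↔
        ((⟨pi, ps⟩ : Σ i, Fin (L i)) = ⟨i, s⟩ ∧ (⟨qi, qt⟩ : Σ i, Fin (L i)) = ⟨i, t⟩) := by
    intro i s t
    rw [show encC L i s = encEquivAux L ⟨i, s⟩ from rfl,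
      show encC L i t = encEquivAux L ⟨i, t⟩ from rfl,
      Equiv.apply_eq_iff_eq, Equiv.apply_eq_iff_eq]
  simp_rw [hcond]
  rcases eq_or_ne pi qi with rfl | hne
  · rw [Matrix.blockDiagonal'_apply_eq]
    rw [Finset.sum_eq_single pi]
    · rw [Finset.sum_eq_single ps]
      · rw [Finset.sum_eq_single qt]
        · simp
        · intro t _ ht; rw [if_neg]; simp [Sigma.mk.inj_iff]; tauto
        · simp
      · intro s _ hs; rw [Finset.sum_eq_zero]; intro t _; rw [if_neg]
        simp [Sigma.mk.inj_iff]; tauto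
      · simp
    · intro i _ hi
      rw [Finset.sum_eq_zero]; intro s _; rw [Finset.sum_eq_zero]; intro t _
      rw [if_neg]; simp [Sigma.mk.inj_iff]; intro h; exact absurd h.symm hi
    · simp
  · rw [Matrix.blockDiagonal'_apply_ne _ _ _ hne]
    rw [Finset.sum_eq_zero]; intro i _
    rw [Finset.sum_eq_zero]; intro s _
    rw [Finset.sum_eq_zero]; intro t _
    rw [if_neg]
    rintro ⟨h1, h2⟩
    rw [Sigma.mk.inj_iff] at h1 h2
    exact hne (h1.1.trans h2.1.symm)

private lemma blockDiag'_mul_blockDiagonal'_aux {n : ℕ} (L : Fin n → ℕ)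
    (M : ∀ i, Matrix (Fin (L i)) (Fin (L i)) ℂ)
    (N : Matrix (Σ i, Fin (L i)) (Σ i, Fin (L i)) ℂ) (i : Fin n) :
    Matrix.blockDiag' (Matrix.blockDiagonal' M * N) i = M i * Matrix.blockDiag' N i := by
  ext s t
  rw [Matrix.blockDiag'_apply, Matrix.mul_apply, Matrix.mul_apply,
    ← Finset.univ_sigma_univ, Finset.sum_sigma]
  rw [Finset.sum_eq_single i]
  · apply Finset.sum_congr rfl
    intro u _
    rw [Matrix.blockDiagonal'_apply_eq, Matrix.blockDiag'_apply]
  · intro i' _ hi'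
    apply Finset.sum_eq_zero; intro u _
    rw [Matrix.blockDiagonal'_apply_ne _ _ _ (Ne.symm hi'), zero_mul]
  · simp

private lemma isUnit_blockDiagonal'_iff_aux {n : ℕ} (L : Fin n → ℕ)
    (M : ∀ i, Matrix (Fin (L i)) (Fin (L i)) ℂ) :
    IsUnit (Matrix.blockDiagonal' M) ↔ ∀ i, IsUnit (M i) := by
  constructor
  · intro h i
    obtain ⟨u, hu⟩ := h
    have h1 : Matrix.blockDiagonal' M * (↑u⁻¹ : Matrix _ _ ℂ) = 1 := by
      rw [← hu]; exact u.mul_inv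
    have h2 := blockDiag'_mul_blockDiagonal'_aux L M (↑u⁻¹) i
    rw [h1, Matrix.blockDiag'_one] at h2
    exact (Matrix.isUnit_iff_isUnit_det _).2
      (Matrix.isUnit_det_of_right_inverse h2.symm)
  · intro h
    have h1 : Matrix.blockDiagonal' M * Matrix.blockDiagonal' (fun i => (M i)⁻¹) = 1 := by
      rw [← Matrix.blockDiagonal'_mul]
      have : (fun i => M i * (M i)⁻¹) = fun _ => 1 := by
        funext i
        exact Matrix.mul_nonsing_inv _ ((Matrix.isUnit_iff_isUnit_det _).1 (h i))
      rw [this]; exact Matrix.blockDiagonal'_one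
    exact (Matrix.isUnit_iff_isUnit_det _).2 (Matrix.isUnit_det_of_right_inverse h1)


/-- `det B_i = (−1)^{l_i(l_i−1)/2} a_{i,l_i−1}^{l_i} ∏_{s=0}^{l_i−1} binom(l_i−1,s)`;
consequently `B_i` is invertible iff `a_{i,l_i−1} ≠ 0`, and the block-diagonal matrix
`B = diag(B_1,…,B_n)` is invertible iff `a_{i,l_i−1} ≠ 0` for every `i`. -/
theorem magBlock_det_and_invertibility
    (n : ℕ) (hn : 1 ≤ n) (l : Fin n → ℕ) (hl : ∀ i, 1 ≤ l i)
    (a : (i : Fin n) → Fin (l i) → ℂ) :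
    (∀ i, (magBlock (l i) (a i)).det =
        (-1 : ℂ) ^ (l i * (l i - 1) / 2) *
          (a i ⟨l i - 1, by have := hl i; omega⟩) ^ (l i) *
          ∏ s ∈ Finset.range (l i), ((l i - 1).choose s : ℂ)) ∧
    (∀ i, IsUnit (magBlock (l i) (a i)) ↔ a i ⟨l i - 1, by have := hl i; omega⟩ ≠ 0) ∧
    (IsUnit (magBlockMat l a) ↔ ∀ i, a i ⟨l i - 1, by have := hl i; omega⟩ ≠ 0) := by
  refine ⟨fun i => magBlock_det_aux (l i) (hl i) (a i),
    fun i => magBlock_isUnit_iff_aux (l i) (hl i) (a i), ?_⟩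
  have hmat : magBlockMat l a =
      (Matrix.blockDiagonal' (fun i => magBlock (l i) (a i))).submatrix
        (encEquivAux l).symm (encEquivAux l).symm :=
    bigOf_eq_aux l _
  rw [hmat, Matrix.isUnit_iff_isUnit_det, Matrix.det_submatrix_equiv_self,
    ← Matrix.isUnit_iff_isUnit_det, isUnit_blockDiagonal'_iff_aux]
  exact forall_congr' fun i => magBlock_isUnit_iff_aux (l i) (hl i) (a i)
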